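/- Let G be a graph on J vertices (relays) where each edge corresponds to a distinct subcarrier that is helped by the two endpoint relays, with edge (j₁,j₂) for subcarrier n imposing μ(j₁)/μ(j₂) = h(n,j₁)/h(n,j₂). If the channel-gain ratios are 'generic' in the sense that no product of edge-ratio constraints around any cycle equals 1, then G is acyclic, hence has at most J−1 edges; therefore at most J−1 subcarriers are assisted by more than one relay. -/

import Mathlib

open Finset SimpleGraph

private lemma tele_prod (f : ℕ → ℝ) (hf : ∀ i, f i ≠ 0) :
    ∀ m : ℕ, ∏ i ∈ Finset.range m, f i / f (i + 1) = f 0 / f m := by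
  intro m
  induction m with
  | zero => simp [div_self (hf 0)]
  | succ m ih =>
    rw [Finset.prod_range_succ, ih, div_mul_div_comm, mul_comm (f 0) (f m),
      mul_div_mul_left _ _ (hf m)]

private lemma getVert_support_get {V : Type*} {G : SimpleGraph V} {u v : V} (p : G.Walk u v) :
    ∀ (i : ℕ) (hi : i < p.support.length), p.getVert i = p.support.get ⟨i, hi⟩ := by
  induction p with
  | nil =>
    intro i hi
    simp only [SimpleGraph.Walk.support_nil, List.length_singleton] at hi
    interval_cases i
    simp
  | cons h q ih =>
    intro i hi
    cases i with
    | zero => simp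
    | succ n =>
      simp only [SimpleGraph.Walk.support_cons, List.length_cons] at hi
      simp only [SimpleGraph.Walk.getVert_cons_succ, SimpleGraph.Walk.support_cons]
      rw [ih n (by omega)]
      simp

private lemma cycle_getVert_inj {V : Type*} {G : SimpleGraph V} {u : V} {c : G.Walk u u}
    (hc : c.IsCycle) : ∀ i, i < c.length → ∀ l, l < c.length → i ≠ l →
      c.getVert i ≠ c.getVert l := by
  have key : ∀ i, i < c.length → ∀ l, l < c.length → i < l →
      c.getVert i ≠ c.getVert l := by
    intro i hi l hl hil
    have hslen : c.support.length = c.length + 1 := c.length_support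
    have htlen : c.support.tail.length = c.length := by
      simp [List.length_tail, hslen]
    have hnd := hc.support_nodup
    -- getVert at positive index j equals tail.get (j-1)
    have hget : ∀ j : ℕ, (hj1 : 1 ≤ j) → (hj : j ≤ c.length) →
        c.getVert j = c.support.tail.get ⟨j - 1, by omega⟩ := by
      intro j hj1 hj
      obtain ⟨j', rfl⟩ : ∃ j', j = j' + 1 := ⟨j - 1, by omega⟩
      simp only [Nat.add_sub_cancel]
      rw [List.get_tail _ j' (by omega) (by omega)]
      exact getVert_support_get c (j' + 1) (by omega)
    cases Nat.eq_zero_or_pos i with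
    | inl h0 =>
      subst h0
      intro hcon
      -- getVert 0 = u and getVert length = u
      have h1 : c.getVert l = c.support.tail.get ⟨l - 1, by omega⟩ := hget l (by omega) (by omega)
      have h2 : c.getVert c.length = c.support.tail.get ⟨c.length - 1, by omega⟩ :=
        hget c.length (by omega) le_rfl
      have h3 : c.support.tail.get ⟨l - 1, by omega⟩ = c.support.tail.get ⟨c.length - 1, by omega⟩ := by
        rw [← h1, ← h2, ← hcon]
        simp
      have := (hnd.get_inj_iff.mp h3)
      have : l - 1 = c.length - 1 := congrArg Fin.val this
      omega
    | inr hpos =>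
      intro hcon
      have h1 : c.getVert i = c.support.tail.get ⟨i - 1, by omega⟩ := hget i hpos (by omega)
      have h2 : c.getVert l = c.support.tail.get ⟨l - 1, by omega⟩ := hget l (by omega) (by omega)
      have h3 : c.support.tail.get ⟨i - 1, by omega⟩ = c.support.tail.get ⟨l - 1, by omega⟩ := by
        rw [← h1, ← h2, hcon]
      have := hnd.get_inj_iff.mp h3
      have : i - 1 = l - 1 := congrArg Fin.val this
      omega
  intro i hi l hl hne
  rcases Nat.lt_or_ge i l with h | h
  · exact key i hi l hl h
  · exact fun hcon => key l hl i hi (by omega) hcon.symm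

private lemma acyclic_sup_edge {V : Type*} {H : SimpleGraph V} (hH : H.IsAcyclic)
    {u v : V} (hne : u ≠ v) (hnr : ¬ H.Reachable u v) :
    (H ⊔ SimpleGraph.fromEdgeSet {s(u, v)}).IsAcyclic := by
  intro w c hc
  have hbr : (H ⊔ SimpleGraph.fromEdgeSet {s(u, v)}).IsBridge s(u, v) := by
    rw [SimpleGraph.isBridge_iff]
    intro hr
    apply hnr
    refine hr.mono ?_
    intro x y hxy
    simp only [SimpleGraph.deleteEdges_adj, SimpleGraph.sdiff_adj, SimpleGraph.sup_adj,
      SimpleGraph.fromEdgeSet_adj, Set.mem_singleton_iff] at hxy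
    tauto
  have hnotmem : s(u, v) ∉ c.edges :=
    SimpleGraph.IsBridge.notMem_edges_of_isCycle hbr hc
  have hsub : ∀ e ∈ c.edges, e ∈ H.edgeSet := by
    intro e he
    have hmem : e ∈ (H ⊔ SimpleGraph.fromEdgeSet {s(u, v)}).edgeSet :=
      c.edges_subset_edgeSet he
    rw [SimpleGraph.edgeSet_sup, SimpleGraph.edgeSet_fromEdgeSet] at hmem
    rcases hmem with h1 | h2
    · exact h1
    · exfalso
      have : e = s(u, v) := h2.1
      exact hnotmem (this ▸ he)
  exact hH (c.transfer H hsub) (hc.transfer hsub)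

private lemma acyclic_card_edge_le {V : Type*} [Fintype V] [DecidableEq V]
    (G : SimpleGraph V) [Fintype G.edgeSet] (hG : G.IsAcyclic) :
    G.edgeFinset.card ≤ Fintype.card V - 1 := by
  classical
  by_cases hV : Nonempty V
  · -- pick a maximal acyclic supergraph
    let S : Finset (SimpleGraph V) :=
      Finset.univ.filter (fun H => G ≤ H ∧ H.IsAcyclic)
    have hGS : G ∈ S := by simp [S, hG]
    obtain ⟨H, hHS, hmax⟩ := S.exists_max_image (fun H => H.edgeSet.ncard) ⟨G, hGS⟩
    simp only [S, Finset.mem_filter, Finset.mem_univ, true_and] at hHS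
    obtain ⟨hGH, hHac⟩ := hHS
    have hconn : H.Connected := by
      rw [SimpleGraph.connected_iff]
      refine ⟨?_, hV⟩
      intro x y
      by_contra hnr
      have hxy : x ≠ y := by rintro rfl; exact hnr (SimpleGraph.Reachable.refl x)
      set H' := H ⊔ SimpleGraph.fromEdgeSet {s(x, y)} with hH'
      have hH'ac : H'.IsAcyclic := acyclic_sup_edge hHac hxy hnr
      have hH'S : H' ∈ S := by
        simp only [S, Finset.mem_filter, Finset.mem_univ, true_and]
        exact ⟨le_trans hGH le_sup_left, hH'ac⟩
      have hlt : H < H' := by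
        refine lt_of_le_of_ne le_sup_left ?_
        intro heq
        have : H'.Adj x y := by simp [hH', hxy]
        rw [← heq] at this
        exact hnr this.reachable
      have hcard : H.edgeSet.ncard < H'.edgeSet.ncard :=
        Set.ncard_lt_ncard (SimpleGraph.edgeSet_strict_mono hlt) (Set.toFinite _)
      have := hmax H' hH'S
      omega
    have htree : H.IsTree := ⟨hconn, hHac⟩
    have hcard := htree.card_edgeFinset
    have hcard' : H.edgeSet.ncard + 1 = Fintype.card V := by
      rwa [Set.ncard_eq_toFinset_card' H.edgeSet]
    have hle : G.edgeSet.ncard ≤ H.edgeSet.ncard :=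
      Set.ncard_le_ncard (SimpleGraph.edgeSet_mono hGH) (Set.toFinite _)
    have hGcard : G.edgeFinset.card = G.edgeSet.ncard :=
      (Set.ncard_eq_toFinset_card' G.edgeSet).symm
    omega
  · have : IsEmpty V := not_nonempty_iff.mp hV
    have hempty : G.edgeFinset = ∅ := by
      ext e
      refine e.ind (fun x y => ?_)
      exact absurd (Nonempty.intro x) hV
    simp [hempty]

/-- Let `G` be the graph on the `J` relays whose edges correspond to distinct
subcarriers helped by the two endpoint relays, edge `(j₁,j₂)` for subcarrier
`sc j₁ j₂` imposing `μ j₁ / μ j₂ = h (sc j₁ j₂) j₁ / h (sc j₁ j₂) j₂`.  If the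
gains are generic — no product of edge-ratio constraints around any cycle
equals `1` — then `G` is acyclic, has at most `J - 1` edges, and hence at most
`J - 1` subcarriers are assisted by more than one relay. -/
theorem acyclic_multiply_helped (J N : ℕ) (μ : Fin J → ℝ) (hμ : ∀ j, 0 < μ j)
    (h : Fin N → Fin J → ℝ) (hh : ∀ n j, 0 < h n j)
    (G : SimpleGraph (Fin J)) [DecidableRel G.Adj]
    (sc : Fin J → Fin J → Fin N)
    (hsym : ∀ j₁ j₂, sc j₁ j₂ = sc j₂ j₁)
    (hinj : ∀ j₁ j₂ j₃ j₄, G.Adj j₁ j₂ → G.Adj j₃ j₄ → sc j₁ j₂ = sc j₃ j₄ →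
      (j₁ = j₃ ∧ j₂ = j₄) ∨ (j₁ = j₄ ∧ j₂ = j₃))
    (hedge : ∀ j₁ j₂, G.Adj j₁ j₂ → μ j₁ / μ j₂ = h (sc j₁ j₂) j₁ / h (sc j₁ j₂) j₂)
    (hgen : ∀ (m : ℕ), 3 ≤ m → ∀ v : ℕ → Fin J,
      (∀ i < m, G.Adj (v i) (v (i + 1))) → v m = v 0 →
      (∀ i, i < m → ∀ l, l < m → i ≠ l → v i ≠ v l) →
      ∏ i ∈ Finset.range m, h (sc (v i) (v (i + 1))) (v i) / h (sc (v i) (v (i + 1))) (v (i + 1)) ≠ 1) :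
    G.IsAcyclic ∧ G.edgeFinset.card ≤ J - 1 ∧
      ({n : Fin N | ∃ j₁ j₂, G.Adj j₁ j₂ ∧ n = sc j₁ j₂}).ncard ≤ J - 1 := by
  classical
  have hac : G.IsAcyclic := by
    intro w c hc
    have h3 := hc.three_le_length
    have hadj : ∀ i < c.length, G.Adj (c.getVert i) (c.getVert (i + 1)) :=
      fun i hi => c.adj_getVert_succ hi
    refine hgen c.length h3 (fun i => c.getVert i) hadj (by simp) (cycle_getVert_inj hc) ?_
    have heq : ∀ i ∈ Finset.range c.length,
        h (sc (c.getVert i) (c.getVert (i + 1))) (c.getVert i) /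
          h (sc (c.getVert i) (c.getVert (i + 1))) (c.getVert (i + 1)) =
        μ (c.getVert i) / μ (c.getVert (i + 1)) := by
      intro i hi
      rw [Finset.mem_range] at hi
      exact (hedge _ _ (hadj i hi)).symm
    rw [Finset.prod_congr rfl heq,
      tele_prod (fun i => μ (c.getVert i)) (fun i => (hμ _).ne')]
    simp [div_self (hμ w).ne']
  have hedgecard : G.edgeFinset.card ≤ J - 1 := by
    have := acyclic_card_edge_le G hac
    simpa using this
  refine ⟨hac, hedgecard, ?_⟩
  set g : Sym2 (Fin J) → Fin N := Sym2.lift ⟨sc, hsym⟩ with hg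
  have hsubset : {n : Fin N | ∃ j₁ j₂, G.Adj j₁ j₂ ∧ n = sc j₁ j₂} ⊆
      ↑(G.edgeFinset.image g) := by
    rintro n ⟨j₁, j₂, hadj, rfl⟩
    simp only [Finset.coe_image, Set.mem_image, Finset.mem_coe,
      SimpleGraph.mem_edgeFinset]
    exact ⟨s(j₁, j₂), hadj, by simp [hg]⟩
  calc ({n : Fin N | ∃ j₁ j₂, G.Adj j₁ j₂ ∧ n = sc j₁ j₂}).ncard
      ≤ (↑(G.edgeFinset.image g) : Set (Fin N)).ncard :=
        Set.ncard_le_ncard hsubset (Set.toFinite _)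
    _ = (G.edgeFinset.image g).card := Set.ncard_coe_finset _
    _ ≤ G.edgeFinset.card := Finset.card_image_le
    _ ≤ J - 1 := hedgecard
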